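/- With notation as above, define $H^\Theta_n = \mathbb{E}[g(\tau^\Theta_n, X_{\tau^\Theta_n}) \mid \mathcal{F}_n]$ and continuation values $C^\Theta_n = \mathbb{E}[g(\tau^\Theta_{n+1}, X_{\tau^\Theta_{n+1}}) \mid \mathcal{F}_n]$. Then the martingale increments of $H^\Theta$ satisfy, for $n \ge 1$, $H^\Theta_n - \mathbb{E}[H^\Theta_n \mid \mathcal{F}_{n-1}] = f^{\theta_n}(X_n)\, g(n, X_n) + (1 - f^{\theta_n}(X_n))\, C^\Theta_n - C^\Theta_{n-1}$ almost surely. -/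

import Mathlib

/-!
On `{f^{θ_n}(X_n) = 1}` the rule stops at `n`, and otherwise `τ_n = τ_{n+1}`, so
`g(τ_n, X_{τ_n}) = f g(n, X_n) + (1 - f) g(τ_{n+1}, X_{τ_{n+1}})` with `f = f^{θ_n}(X_n)`.
Since `f` and `g(n, X_n)` are `𝓕_n`-measurable and `f ∈ {0, 1}`, conditioning on `𝓕_n` gives
`H_n = f g(n, X_n) + (1 - f) C_n`, while the tower property gives
`𝔼[H_n | 𝓕_{n-1}] = C_{n-1}`.
-/

open MeasureTheory Filter Set

/-- The paper's `τ_k = ∑_{m=k}^N m a_m ∏_{j=k}^{m-1} (1 - a_j)`: for `{0,1}`-valued `a` with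
`a N = 1`, the first `m ∈ [k, N]` with `a m = 1`. -/
def stopIndex (N : ℕ) (a : ℕ → ℕ) (k : ℕ) : ℕ :=
  ∑ m ∈ Finset.Icc k N, m * a m * ∏ j ∈ Finset.Ico k m, (1 - a j)

section stopIndex

variable {N : ℕ} {a : ℕ → ℕ} {k : ℕ}

theorem stopIndex_of_eq_one (hk : k ≤ N) (h : a k = 1) : stopIndex N a k = k := by
  rw [stopIndex, Finset.sum_eq_single_of_mem k (Finset.mem_Icc.mpr ⟨le_rfl, hk⟩)]
  · simp [h]
  · intro m hm hmk
    have hkm : k < m := lt_of_le_of_ne (Finset.mem_Icc.mp hm).1 (Ne.symm hmk)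
    rw [Finset.prod_eq_zero (Finset.mem_Ico.mpr ⟨le_rfl, hkm⟩) (by simp [h]), mul_zero]

theorem stopIndex_of_eq_zero (hk : k < N) (h : a k = 0) :
    stopIndex N a k = stopIndex N a (k + 1) := by
  rw [stopIndex, ← Finset.insert_Icc_add_one_left_eq_Icc hk.le, Finset.sum_insert (by simp), h,
    mul_zero, zero_mul, zero_add, stopIndex]
  refine Finset.sum_congr rfl fun m hm => ?_
  have hkm : k < m := (Finset.mem_Icc.mp hm).1
  rw [Finset.prod_eq_prod_Ico_succ_bot hkm, h, Nat.sub_zero, one_mul]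

theorem stopIndex_mem_Icc (ha : ∀ m, a m ≤ 1) (haN : a N = 1) (hk : k ≤ N) :
    stopIndex N a k ∈ Finset.Icc k N := by
  induction hd : N - k generalizing k with
  | zero =>
    obtain rfl : k = N := by omega
    simp [stopIndex_of_eq_one le_rfl haN]
  | succ d ih =>
    rcases Nat.le_one_iff_eq_zero_or_eq_one.mp (ha k) with h | h
    · rw [stopIndex_of_eq_zero (by omega) h]
      have := Finset.mem_Icc.mp (ih (k := k + 1) (by omega) (by omega))
      exact Finset.mem_Icc.mpr ⟨by omega, this.2⟩
    · simp [stopIndex_of_eq_one hk h, hk]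

theorem apply_stopIndex_of_lt {R : Type*} [Ring R] (φ : ℕ → R) (hk : k < N) (ha : a k ≤ 1) :
    φ (stopIndex N a k) = a k * φ k + (1 - a k) * φ (stopIndex N a (k + 1)) := by
  rcases Nat.le_one_iff_eq_zero_or_eq_one.mp ha with h | h
  · simp [stopIndex_of_eq_zero hk h, h]
  · simp [stopIndex_of_eq_one hk.le h, h]

end stopIndex

section condExp

variable {Ω : Type*} {m m0 : MeasurableSpace Ω} {μ : Measure Ω}

theorem integrable_of_index_mem_finset {ι E : Type*} [MeasurableSpace ι]
    [MeasurableSingletonClass ι] [NormedAddCommGroup E] {Y : ι → Ω → E} {T : Ω → ι}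
    {s : Finset ι} (hT : Measurable T) (hTs : ∀ ω, T ω ∈ s)
    (hY : ∀ i ∈ s, Integrable (Y i) μ) :
    Integrable (fun ω => Y (T ω) ω) μ := by
  have hsum :
      (fun ω => Y (T ω) ω) = fun ω => ∑ i ∈ s, (T ⁻¹' {i}).indicator (Y i) ω := by
    ext ω
    rw [Finset.sum_eq_single_of_mem (T ω) (hTs ω)]
    · simp
    · intro i _ hi
      exact indicator_of_notMem (show ω ∉ T ⁻¹' {i} from Ne.symm hi) _
  rw [hsum]
  exact integrable_finsetSum _ fun i hi => (hY i hi).indicator (hT (measurableSet_singleton i))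

theorem condExp_mul_add_one_sub_mul [IsFiniteMeasure μ] (hm : m ≤ m0) {c Y Z : Ω → ℝ}
    (hc : StronglyMeasurable[m] c) (hc01 : ∀ ω, c ω ∈ Icc 0 1) (hY : StronglyMeasurable[m] Y)
    (hYi : Integrable Y μ) (hZ : Integrable Z μ) :
    μ[fun ω => c ω * Y ω + (1 - c ω) * Z ω | m] =ᵐ[μ]
      fun ω => c ω * Y ω + (1 - c ω) * μ[Z | m] ω := by
  have hc_bdd : ∀ᵐ ω ∂μ, ‖c ω‖ ≤ 1 := .of_forall fun ω => by
    rw [Real.norm_of_nonneg (hc01 ω).1]; exact (hc01 ω).2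
  have hc'_bdd : ∀ᵐ ω ∂μ, ‖1 - c ω‖ ≤ 1 := .of_forall fun ω => by
    rw [Real.norm_of_nonneg (by linarith [(hc01 ω).2])]; linarith [(hc01 ω).1]
  have hc' : StronglyMeasurable[m] (1 - c) := stronglyMeasurable_const.sub hc
  have hcY : Integrable (c * Y) μ := hYi.bdd_mul (hc.mono hm).aestronglyMeasurable hc_bdd
  have hc'Z : Integrable ((1 - c) * Z) μ := hZ.bdd_mul (hc'.mono hm).aestronglyMeasurable hc'_bdd
  filter_upwards [condExp_add hcY hc'Z m,
    condExp_stronglyMeasurable_mul_of_bound hm hc' hZ 1 hc'_bdd] with ω hsum hprod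
  simp only [Pi.add_apply] at hsum
  rw [show (fun ω => c ω * Y ω + (1 - c ω) * Z ω) = c * Y + (1 - c) * Z from rfl, hsum, hprod,
    condExp_of_stronglyMeasurable hm (hc.mul hY) hcY]
  rfl

end condExp

section OptimalStopping

variable {Ω : Type*} {m0 : MeasurableSpace Ω} {μ : Measure Ω}
  {F : Filtration ℕ m0} {N : ℕ} {a : ℕ → Ω → ℕ} {Y : ℕ → Ω → ℝ}

theorem measurable_stopIndex (ha : ∀ m, Measurable (a m)) (k : ℕ) :
    Measurable fun ω => stopIndex N (a · ω) k := by
  unfold stopIndex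
  exact Finset.measurable_sum _ fun m _ => (measurable_const.mul (ha m)).mul <|
    Finset.measurable_prod _ fun j _ => measurable_const.sub (ha j)

theorem integrable_apply_stopIndex (ha : ∀ m, Measurable (a m)) (ha01 : ∀ m ω, a m ω ≤ 1)
    (haN : ∀ ω, a N ω = 1) (hY : ∀ m ≤ N, Integrable (Y m) μ) {k : ℕ} (hk : k ≤ N) :
    Integrable (fun ω => Y (stopIndex N (a · ω) k) ω) μ :=
  integrable_of_index_mem_finset (measurable_stopIndex ha k)
    (fun ω => stopIndex_mem_Icc (ha01 · ω) (haN ω) hk) fun m hm => hY m (Finset.mem_Icc.mp hm).2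

theorem condExp_apply_stopIndex_of_lt [IsFiniteMeasure μ] (ha : ∀ m, Measurable[F m] (a m))
    (ha01 : ∀ m ω, a m ω ≤ 1) (haN : ∀ ω, a N ω = 1)
    (hY : ∀ m, StronglyMeasurable[F m] (Y m)) (hYi : ∀ m ≤ N, Integrable (Y m) μ) {k : ℕ}
    (hk : k < N) :
    μ[fun ω => Y (stopIndex N (a · ω) k) ω | F k] =ᵐ[μ]
      fun ω => a k ω * Y k ω +
        (1 - a k ω) * μ[fun ω => Y (stopIndex N (a · ω) (k + 1)) ω | F k] ω := by
  have hrec : (fun ω => Y (stopIndex N (a · ω) k) ω) = fun ω =>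
      a k ω * Y k ω + (1 - a k ω) * Y (stopIndex N (a · ω) (k + 1)) ω :=
    funext fun ω => apply_stopIndex_of_lt (Y · ω) hk (ha01 k ω)
  rw [hrec]
  refine condExp_mul_add_one_sub_mul (F.le k) (measurable_from_nat.comp (ha k)).stronglyMeasurable
    (fun ω => ⟨Nat.cast_nonneg _, Nat.cast_le_one.mpr (ha01 k ω)⟩) (hY k) (hYi k hk.le) ?_
  exact integrable_apply_stopIndex (fun m => (ha m).mono (F.le m) le_rfl) ha01 haN hYi hk

theorem condExp_apply_stopIndex_self [IsFiniteMeasure μ] (haN : ∀ ω, a N ω = 1)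
    (hY : StronglyMeasurable[F N] (Y N)) (hYi : Integrable (Y N) μ) :
    μ[fun ω => Y (stopIndex N (a · ω) N) ω | F N] = Y N := by
  have hstop : ∀ ω, stopIndex N (a · ω) N = N := fun ω => stopIndex_of_eq_one le_rfl (haN ω)
  simp only [hstop]
  exact condExp_of_stronglyMeasurable (F.le N) hY hYi

end OptimalStopping

theorem stmt12
    {Ω : Type*} {m0 : MeasurableSpace Ω} (μ : Measure Ω) [IsProbabilityMeasure μ]
    (d N : ℕ)
    (X : ℕ → Ω → (Fin d → ℝ)) (hX : ∀ m, StronglyMeasurable (X m))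
    (g : ℕ → (Fin d → ℝ) → ℝ) (hg : ∀ m, Measurable (g m))
    (hgint : ∀ m, m ≤ N → Integrable (fun ω => g m (X m ω)) μ)
    (f : ℕ → (Fin d → ℝ) → ℕ) (hf : ∀ m, Measurable (f m))
    (hf01 : ∀ m x, f m x ≤ 1) (hfN : ∀ x, f N x = 1)
    (τ : ℕ → Ω → ℕ)
    (hτ : ∀ k ω, τ k ω = ∑ m ∈ Finset.Icc k N,
        m * f m (X m ω) * ∏ j ∈ Finset.Ico k m, (1 - f j (X j ω)))
    (H C : ℕ → Ω → ℝ)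
    (hH : ∀ k, k ≤ N →
      H k =ᵐ[μ] μ[(fun ω => g (τ k ω) (X (τ k ω) ω)) | (MeasureTheory.Filtration.natural X hX) k])
    (hC : ∀ k, k < N →
      C k =ᵐ[μ] μ[(fun ω => g (τ (k + 1) ω) (X (τ (k + 1) ω) ω)) |
        (MeasureTheory.Filtration.natural X hX) k])
    (n : ℕ) (hn1 : 1 ≤ n) (hnN : n ≤ N) :
    (fun ω => H n ω - (μ[H n | (MeasureTheory.Filtration.natural X hX) (n - 1)]) ω)
      =ᵐ[μ] fun ω => (f n (X n ω) : ℝ) * g n (X n ω)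
        + (1 - (f n (X n ω) : ℝ)) * (if n < N then C n ω else 0) - C (n - 1) ω := by
  set F := Filtration.natural X hX
  obtain rfl : τ = fun k ω => stopIndex N (fun m => f m (X m ω)) k := funext₂ hτ
  have hXF : ∀ m, Measurable[F m] (X m) :=
    fun m => (Filtration.stronglyAdapted_natural hX m).measurable
  have hgF : ∀ m, StronglyMeasurable[F m] fun ω => g m (X m ω) :=
    fun m => ((hg m).comp (hXF m)).stronglyMeasurable
  have hH_n : H n =ᵐ[μ] fun ω => (f n (X n ω) : ℝ) * g n (X n ω)
      + (1 - (f n (X n ω) : ℝ)) * (if n < N then C n ω else 0) := by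
    refine (hH n hnN).trans ?_
    rcases hnN.lt_or_eq with hn | rfl
    · filter_upwards [condExp_apply_stopIndex_of_lt (a := fun m ω => f m (X m ω))
        (fun m => (hf m).comp (hXF m)) (fun m ω => hf01 m _) (fun ω => hfN _) hgF hgint hn,
        hC n hn] with ω h hCω
      simp [h, hCω, hn]
    · have hpayoff := condExp_apply_stopIndex_self (a := fun m ω => f m (X m ω))
        (Y := fun m ω => g m (X m ω)) (fun ω => hfN _) (hgF n) (hgint n le_rfl)
      refine hpayoff.eventuallyEq.trans (.of_forall fun ω => ?_)
      simp [hfN]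
  obtain ⟨k, rfl⟩ : ∃ k, n = k + 1 := ⟨n - 1, by omega⟩
  have hcondExp_H : μ[H (k + 1) | F k] =ᵐ[μ] C k :=
    (condExp_congr_ae (hH (k + 1) hnN)).trans <|
      (condExp_condExp_of_le (F.mono k.le_succ) (F.le _)).trans (hC k hnN).symm
  filter_upwards [hH_n, hcondExp_H] with ω hHω hCω
  rw [Nat.add_sub_cancel, hHω, hCω]
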